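/- arXiv:1110.1811 — 4 statements merged into one kernel-verified Lean document; each statement's English description precedes it below -/
import Mathlib

section
/- Let X₁,…,Xₙ be sets each with distinguished elements 0,1, Y a finite distributive lattice, and f : ∏ X_i → Y pseudo-median decomposable with respect to maps φ_k : X_k → Y satisfying the boundary condition φ_k(0) ≤ φ_k(x) ≤ φ_k(1), i.e., f(x) = med(f(x_k^0), φ_k(x_k), f(x_k^1)) for all x and k, where x_k^a replaces the k-th coordinate of x by a. Then f(x) = ⋁_{I ⊆ [n]} ( f(1̂_I) ∧ ⋀_{i∈I} φ_i(x_i) ), where 1̂_I ∈ ∏ X_i has i-th component 1 if i ∈ I and 0 otherwise. -/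
def med {L : Type*} [Lattice L] (a b c : L) : L := (a ⊓ b) ⊔ (b ⊓ c) ⊔ (c ⊓ a)

lemma med_eq_of_le {Y : Type*} [DistribLattice Y] {A b C : Y} (h : A ≤ b ⊔ C) :
    med A b C = A ⊔ (C ⊓ b) := by
  unfold med
  apply le_antisymm
  · exact sup_le (sup_le (inf_le_left.trans le_sup_left)
      ((inf_comm b C).le.trans le_sup_right)) (inf_le_right.trans le_sup_left)
  · apply sup_le
    · have hA : A = A ⊓ b ⊔ A ⊓ C := by rw [← inf_sup_left, inf_eq_left.mpr h]
      calc A = A ⊓ b ⊔ A ⊓ C := hA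
        _ ≤ _ := sup_le (le_sup_left.trans le_sup_left) ((inf_comm A C).le.trans le_sup_right)
    · exact (inf_comm C b).le.trans (le_sup_right.trans le_sup_left)

lemma med_le_sup_right' {Y : Type*} [Lattice Y] (A b C : Y) : med A b C ≤ b ⊔ C :=
  sup_le (sup_le (inf_le_right.trans le_sup_left) (inf_le_right.trans le_sup_right))
    (inf_le_left.trans le_sup_right)

theorem stmt_12 {Y : Type*} [Fintype Y] [DistribLattice Y] [BoundedOrder Y] {n : ℕ}
    (X : Fin n → Type*) (x0 x1 : ∀ k, X k) (hx : ∀ k, x0 k ≠ x1 k)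
    (f : (∀ k, X k) → Y) (φ : ∀ k, X k → Y)
    (hbc : ∀ k (a : X k), φ k (x0 k) ≤ φ k a ∧ φ k a ≤ φ k (x1 k))
    (hdec : ∀ (x : ∀ k, X k) (k : Fin n),
      f x = med (f (Function.update x k (x0 k))) (φ k (x k)) (f (Function.update x k (x1 k))))
    (x : ∀ k, X k) :
    f x = (Finset.univ : Finset (Finset (Fin n))).sup
      (fun I => f (fun i => if i ∈ I then x1 i else x0 i) ⊓ I.inf (fun i => φ i (x i))) := by
  suffices h : ∀ S : Finset (Fin n), ∀ x : ∀ k, X k,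
      f x = S.powerset.sup (fun I =>
        f (fun i => if i ∈ I then x1 i else if i ∈ S then x0 i else x i)
          ⊓ I.inf (fun i => φ i (x i))) by
    have hh := h Finset.univ x
    rw [Finset.powerset_univ] at hh
    simpa using hh
  intro S
  induction S using Finset.induction_on with
  | empty =>
      intro x
      simp
  | @insert k S hk ih =>
      intro x
      -- abbreviations as functions
      have hA : f (Function.update x k (x0 k)) =
          S.powerset.sup (fun I =>
            f (fun i => if i ∈ I then x1 i else if i ∈ insert k S then x0 i else x i)
              ⊓ I.inf (fun i => φ i (x i))) := by
        rw [ih (Function.update x k (x0 k))]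
        apply Finset.sup_congr rfl
        intro I hI
        rw [Finset.mem_powerset] at hI
        have hkI : k ∉ I := fun h => hk (hI h)
        congr 1
        · congr 1
          funext i
          by_cases hiI : i ∈ I
          · simp [hiI]
          · by_cases hiS : i ∈ S
            · simp [hiI, hiS, Finset.mem_insert]
            · by_cases hik : i = k
              · subst hik
                simp [hiI, hiS, Function.update_self]
              · simp [hiI, hiS, hik, Function.update_of_ne hik]
        · apply Finset.inf_congr rfl
          intro i hiI
          have : i ≠ k := fun h => hkI (h ▸ hiI)
          rw [Function.update_of_ne this]
      have hC : f (Function.update x k (x1 k)) =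
          S.powerset.sup (fun I =>
            f (fun i => if i ∈ insert k I then x1 i else if i ∈ insert k S then x0 i else x i)
              ⊓ I.inf (fun i => φ i (x i))) := by
        rw [ih (Function.update x k (x1 k))]
        apply Finset.sup_congr rfl
        intro I hI
        rw [Finset.mem_powerset] at hI
        have hkI : k ∉ I := fun h => hk (hI h)
        congr 1
        · congr 1
          funext i
          by_cases hik : i = k
          · subst hik
            have hiS : i ∉ S := hk
            simp [hkI, hiS, Function.update_self, Finset.mem_insert]
          · by_cases hiI : i ∈ I
            · simp [hiI, Finset.mem_insert, hik]
            · by_cases hiS : i ∈ S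
              · simp [hiI, hiS, Finset.mem_insert, hik]
              · simp [hiI, hiS, hik, Finset.mem_insert, Function.update_of_ne hik]
        · apply Finset.inf_congr rfl
          intro i hiI
          have : i ≠ k := fun h => hkI (h ▸ hiI)
          rw [Function.update_of_ne this]
      -- key inequality
      have hkey : S.powerset.sup (fun I =>
            f (fun i => if i ∈ I then x1 i else if i ∈ insert k S then x0 i else x i)
              ⊓ I.inf (fun i => φ i (x i))) ≤ φ k (x k) ⊔
          S.powerset.sup (fun I =>
            f (fun i => if i ∈ insert k I then x1 i else if i ∈ insert k S then x0 i else x i)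
              ⊓ I.inf (fun i => φ i (x i))) := by
        apply Finset.sup_le
        intro I hI
        rw [Finset.mem_powerset] at hI
        have hkI : k ∉ I := fun h => hk (hI h)
        set wI : ∀ i, X i := fun i => if i ∈ I then x1 i else if i ∈ insert k S then x0 i else x i
          with hwI
        set vI : ∀ i, X i :=
          fun i => if i ∈ insert k I then x1 i else if i ∈ insert k S then x0 i else x i with hvI
        have hwk : wI k = x0 k := by simp [hwI, hkI, Finset.mem_insert]
        have h1 : Function.update wI k (x0 k) = wI := by
          funext i
          by_cases hik : i = k
          · subst hik; rw [Function.update_self, hwk]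
          · rw [Function.update_of_ne hik]
        have h2 : Function.update wI k (x1 k) = vI := by
          funext i
          by_cases hik : i = k
          · subst hik
            simp [hwI, hvI, Function.update_self, Finset.mem_insert]
          · rw [Function.update_of_ne hik]
            simp [hwI, hvI, Finset.mem_insert, hik]
        have hd := hdec wI k
        rw [h1, h2, hwk] at hd
        have hle2 : f wI ≤ φ k (x k) ⊔ f vI :=
          (hd.le.trans (med_le_sup_right' _ _ _)).trans (sup_le_sup_right (hbc k (x k)).1 _)
        calc f wI ⊓ I.inf (fun i => φ i (x i))
            ≤ (φ k (x k) ⊔ f vI) ⊓ I.inf (fun i => φ i (x i)) := inf_le_inf_right _ hle2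
          _ = φ k (x k) ⊓ I.inf (fun i => φ i (x i))
              ⊔ f vI ⊓ I.inf (fun i => φ i (x i)) := inf_sup_right _ _ _
          _ ≤ _ := by
              refine sup_le_sup inf_le_left ?_
              exact Finset.le_sup (s := S.powerset)
                (f := fun J => f (fun i =>
                  if i ∈ insert k J then x1 i else if i ∈ insert k S then x0 i else x i)
                  ⊓ J.inf fun i => φ i (x i)) (Finset.mem_powerset.mpr hI)
      -- transform the RHS of the goal
      rw [Finset.powerset_insert, Finset.sup_union, Finset.sup_image]
      have hright : S.powerset.sup ((fun I =>
            f (fun i => if i ∈ I then x1 i else if i ∈ insert k S then x0 i else x i)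
              ⊓ I.inf (fun i => φ i (x i))) ∘ insert k) =
          (S.powerset.sup (fun I =>
            f (fun i => if i ∈ insert k I then x1 i else if i ∈ insert k S then x0 i else x i)
              ⊓ I.inf (fun i => φ i (x i)))) ⊓ φ k (x k) := by
        rw [Finset.sup_inf_distrib_right]
        apply Finset.sup_congr rfl
        intro I hI
        rw [Finset.mem_powerset] at hI
        have hkI : k ∉ I := fun h => hk (hI h)
        simp only [Function.comp_apply]
        rw [Finset.inf_insert]
        rw [inf_left_comm, inf_comm]
      rw [hright, hdec x k, hA, hC]
      exact med_eq_of_le hkey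
end

section
/- Let Y be a finite distributive lattice, X₁,…,Xₙ sets with distinguished elements 0,1, p : Y^n → Y a lattice polynomial function, and φ_k : X_k → Y maps satisfying the boundary condition φ_k(0) ≤ φ_k(x) ≤ φ_k(1). Then the pseudo-polynomial function f(x) = p(φ₁(x₁),…,φₙ(xₙ)) is pseudo-median decomposable: f(x) = med(f(x_k^0), φ_k(x_k), f(x_k^1)) for every x and every k. -/
inductive IsLatticePoly (Y : Type*) [Lattice Y] (n : ℕ) : ((Fin n → Y) → Y) → Prop
  | proj (i : Fin n) : IsLatticePoly Y n (fun y => y i)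
  | const (c : Y) : IsLatticePoly Y n (fun _ => c)
  | sup {p q : (Fin n → Y) → Y} : IsLatticePoly Y n p → IsLatticePoly Y n q →
      IsLatticePoly Y n (fun y => p y ⊔ q y)
  | inf {p q : (Fin n → Y) → Y} : IsLatticePoly Y n p → IsLatticePoly Y n q →
      IsLatticePoly Y n (fun y => p y ⊓ q y)

lemma med_of_le {L : Type*} [Lattice L] {u c v : L} (h : u ≤ v) :
    med u c v = u ⊔ (c ⊓ v) := by
  unfold med
  rw [inf_eq_right.mpr h]
  apply le_antisymm
  · refine sup_le (sup_le ?_ ?_) le_sup_left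
    · exact le_sup_of_le_right (inf_le_inf_right c h |>.trans (le_of_eq (inf_comm _ _)))
    · exact le_sup_right
  · exact sup_le le_sup_right (le_sup_of_le_left le_sup_right)


lemma inf_med_aux {Y : Type*} [DistribLattice Y] {pa pb qa qb c : Y}
    (h1 : pa ≤ pb) (h2 : qa ≤ qb) :
    (pa ⊔ c ⊓ pb) ⊓ (qa ⊔ c ⊓ qb) = pa ⊓ qa ⊔ c ⊓ (pb ⊓ qb) := by
  apply le_antisymm
  · rw [inf_sup_left, inf_sup_right, inf_sup_right]
    refine sup_le (sup_le le_sup_left ?_) (sup_le ?_ ?_)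
    · refine le_sup_of_le_right ?_
      rw [inf_assoc]
      exact inf_le_inf_left c (inf_le_inf_left pb h2)
    · refine le_sup_of_le_right ?_
      calc pa ⊓ (c ⊓ qb) ≤ pb ⊓ (c ⊓ qb) := inf_le_inf_right _ h1
        _ = c ⊓ (pb ⊓ qb) := inf_left_comm _ _ _
    · exact le_sup_of_le_right (le_inf (inf_le_left.trans inf_le_left)
        (inf_le_inf inf_le_right inf_le_right))
  · refine sup_le (le_inf (le_sup_of_le_left inf_le_left) (le_sup_of_le_left inf_le_right))
      (le_inf (le_sup_of_le_right (inf_le_inf_left c inf_le_left))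
        (le_sup_of_le_right (inf_le_inf_left c inf_le_right)))

lemma key {Y : Type*} [DistribLattice Y] {n : ℕ} {p : (Fin n → Y) → Y}
    (hp : IsLatticePoly Y n p) (k : Fin n) (a b : Y) :
    ∀ y : Fin n → Y, a ≤ y k → y k ≤ b →
      p (Function.update y k a) ≤ p (Function.update y k b) ∧
      p y = p (Function.update y k a) ⊔ (y k ⊓ p (Function.update y k b)) := by
  induction hp with
  | proj i =>
    intro y h1 h2
    by_cases h : i = k
    · subst h
      simp only [Function.update_self]
      exact ⟨h1.trans h2, by rw [inf_eq_left.mpr h2, sup_eq_right.mpr h1]⟩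
    · simp only [Function.update_of_ne h]
      exact ⟨le_rfl, (sup_eq_left.mpr inf_le_right).symm⟩
  | const c => intro y _ _; simp
  | sup hp hq ihp ihq =>
    intro y h1 h2
    obtain ⟨hle, heq⟩ := ihp y h1 h2
    obtain ⟨hle', heq'⟩ := ihq y h1 h2
    refine ⟨sup_le_sup hle hle', ?_⟩
    dsimp only
    rw [heq, heq', inf_sup_left]
    exact sup_sup_sup_comm _ _ _ _
  | inf hp hq ihp ihq =>
    intro y h1 h2
    obtain ⟨hle, heq⟩ := ihp y h1 h2
    obtain ⟨hle', heq'⟩ := ihq y h1 h2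
    refine ⟨inf_le_inf hle hle', ?_⟩
    dsimp only
    rw [heq, heq']
    exact inf_med_aux hle hle'

theorem stmt_13 {Y : Type*} [Fintype Y] [DistribLattice Y] [BoundedOrder Y] {n : ℕ}
    (X : Fin n → Type*) (x0 x1 : ∀ k, X k) (hx : ∀ k, x0 k ≠ x1 k)
    (p : (Fin n → Y) → Y) (hp : IsLatticePoly Y n p)
    (φ : ∀ k, X k → Y)
    (hbc : ∀ k (a : X k), φ k (x0 k) ≤ φ k a ∧ φ k a ≤ φ k (x1 k))
    (f : (∀ k, X k) → Y) (hf : ∀ x, f x = p (fun i => φ i (x i)))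
    (x : ∀ k, X k) (k : Fin n) :
    f x = med (f (Function.update x k (x0 k))) (φ k (x k))
      (f (Function.update x k (x1 k))) := by
  set y : Fin n → Y := fun i => φ i (x i) with hy
  have h0 : (fun i => φ i (Function.update x k (x0 k) i)) = Function.update y k (φ k (x0 k)) := by
    funext i
    by_cases h : i = k
    · subst h; simp
    · simp [Function.update_of_ne h, hy]
  have h1 : (fun i => φ i (Function.update x k (x1 k) i)) = Function.update y k (φ k (x1 k)) := by
    funext i
    by_cases h : i = k
    · subst h; simp
    · simp [Function.update_of_ne h, hy]
  obtain ⟨hle, heq⟩ := key hp k (φ k (x0 k)) (φ k (x1 k)) y (hbc k (x k)).1 (hbc k (x k)).2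
  rw [hf, hf, hf, h0, h1, med_of_le hle, heq]
end

section
/- Let U be a finite set, Y a sublattice of 𝒫(U) containing ∅ and U, with closure cl and interior int operators induced by Y. For any u, m, w ∈ Y with u ≤ m ≤ w, one has cl(m ∩ uᶜ) ≤ m and m ≤ int(m ∪ wᶜ), and moreover med(u, cl(m ∩ uᶜ), w) = m and med(u, int(m ∪ wᶜ), w) = m. -/
theorem stmt_15 {U : Type*} [Fintype U] (Y : Set (Set U))
    (h0 : ∅ ∈ Y) (h1 : Set.univ ∈ Y)
    (hcup : ∀ a ∈ Y, ∀ b ∈ Y, a ∪ b ∈ Y) (hcap : ∀ a ∈ Y, ∀ b ∈ Y, a ∩ b ∈ Y)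
    (cl int : Set U → Set U)
    (hcl : ∀ S, cl S = ⋂₀ {y | y ∈ Y ∧ S ⊆ y})
    (hint : ∀ S, int S = ⋃₀ {y | y ∈ Y ∧ y ⊆ S})
    (u m w : Set U) (hu : u ∈ Y) (hm : m ∈ Y) (hw : w ∈ Y)
    (hum : u ⊆ m) (hmw : m ⊆ w) :
    cl (m ∩ uᶜ) ⊆ m ∧ m ⊆ int (m ∪ wᶜ) ∧
    med u (cl (m ∩ uᶜ)) w = m ∧ med u (int (m ∪ wᶜ)) w = m := by
  have hclsub : cl (m ∩ uᶜ) ⊆ m := by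
    rw [hcl]
    exact Set.sInter_subset_of_mem ⟨hm, Set.inter_subset_left⟩
  have hintsup : m ⊆ int (m ∪ wᶜ) := by
    rw [hint]
    exact Set.subset_sUnion_of_mem ⟨hm, Set.subset_union_left⟩
  have hsubcl : m ∩ uᶜ ⊆ cl (m ∩ uᶜ) := by
    rw [hcl]; exact Set.subset_sInter fun y hy => hy.2
  have hintsub : int (m ∪ wᶜ) ⊆ m ∪ wᶜ := by
    rw [hint]; exact Set.sUnion_subset fun y hy => hy.2
  refine ⟨hclsub, hintsup, ?_, ?_⟩
  · set b := cl (m ∩ uᶜ)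
    have hmed : med u b w = u ∪ b := by
      unfold med
      have h1 : u ⊓ b ≤ u ∪ b := le_sup_of_le_left inf_le_left
      have h2 : b ⊓ w = b := inf_eq_left.mpr (hclsub.trans hmw)
      have h3 : w ⊓ u = u := inf_eq_right.mpr (hum.trans hmw)
      rw [h2, h3]
      exact le_antisymm (sup_le (sup_le h1 le_sup_right) le_sup_left)
        (sup_le le_sup_right (le_sup_of_le_left le_sup_right))
    rw [hmed]
    apply le_antisymm (sup_le hum hclsub)
    intro x hx
    by_cases hxu : x ∈ u
    · exact Or.inl hxu
    · exact Or.inr (hsubcl ⟨hx, hxu⟩)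
  · set b := int (m ∪ wᶜ)
    have hub : u ⊓ b = u := inf_eq_left.mpr (hum.trans hintsup)
    have hbw : b ⊓ w = m := by
      apply le_antisymm
      · intro x hx
        rcases hintsub hx.1 with h | h
        · exact h
        · exact absurd hx.2 h
      · exact le_inf hintsup hmw
    have hwu : w ⊓ u = u := inf_eq_right.mpr (hum.trans hmw)
    unfold med
    rw [hub, hbw, hwu]
    rw [sup_eq_right.mpr hum, sup_eq_left.mpr hum]
end

section
/- Let Y be a finite distributive lattice realized as a sublattice of a finite powerset, X₁,…,Xₙ sets with distinguished elements 0,1, and f : ∏ X_i → Y a function satisfying the boundary condition f(x_k^0) ≤ f(x) ≤ f(x_k^1) for all k and x. Define Φ_k^-(a) = ⋁_{x : x_k = a} cl( f(x) ∧ f(x_k^0)ᶜ ) and Φ_k^+(a) = ⋀_{x : x_k = a} int( f(x) ∨ f(x_k^1)ᶜ ). If Φ_k^- ≤ Φ_k^+ for all k, then f(x) = med( f(x_k^0), Φ_k^-(x_k), f(x_k^1) ) for every x and k. -/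
theorem stmt_18 {U : Type*} [Fintype U] (Y : Set (Set U))
    (h0 : ∅ ∈ Y) (h1 : Set.univ ∈ Y)
    (hcup : ∀ a ∈ Y, ∀ b ∈ Y, a ∪ b ∈ Y) (hcap : ∀ a ∈ Y, ∀ b ∈ Y, a ∩ b ∈ Y)
    (cl int : Set U → Set U)
    (hcl : ∀ S, cl S = ⋂₀ {y | y ∈ Y ∧ S ⊆ y})
    (hint : ∀ S, int S = ⋃₀ {y | y ∈ Y ∧ y ⊆ S})
    {n : ℕ} (X : Fin n → Type*) [∀ k, Fintype (X k)]
    (x0 x1 : ∀ k, X k) (hx : ∀ k, x0 k ≠ x1 k)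
    (f : (∀ k, X k) → Set U) (hfY : ∀ x, f x ∈ Y)
    (hbc : ∀ (x : ∀ k, X k) (k : Fin n),
      f (Function.update x k (x0 k)) ⊆ f x ∧ f x ⊆ f (Function.update x k (x1 k)))
    (Φm Φp : ∀ k : Fin n, X k → Set U)
    (hΦm : ∀ k a, Φm k a = ⋃ x ∈ {x : ∀ i, X i | x k = a},
      cl (f x ∩ (f (Function.update x k (x0 k)))ᶜ))
    (hΦp : ∀ k a, Φp k a = ⋂ x ∈ {x : ∀ i, X i | x k = a},
      int (f x ∪ (f (Function.update x k (x1 k)))ᶜ))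
    (hle : ∀ k a, Φm k a ⊆ Φp k a)
    (x : ∀ k, X k) (k : Fin n) :
    f x = med (f (Function.update x k (x0 k))) (Φm k (x k))
      (f (Function.update x k (x1 k))) := by
  obtain ⟨hA, hB⟩ := hbc x k
  set A := f (Function.update x k (x0 k)) with hAdef
  set B := f (Function.update x k (x1 k)) with hBdef
  set Φ := Φm k (x k) with hΦdef
  have hxmem : x ∈ {x' : ∀ i, X i | x' k = x k} := rfl
  have hsub : f x ∩ Aᶜ ⊆ Φ := by
    rw [hΦdef, hΦm]
    intro u hu
    refine Set.mem_biUnion hxmem ?_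
    rw [hcl]
    intro y hy
    exact hy.2 hu
  have hΦB : Φ ∩ B ⊆ f x := by
    intro u ⟨hu1, hu2⟩
    have h1 : u ∈ Φp k (x k) := hle k (x k) hu1
    rw [hΦp] at h1
    have h2 := Set.mem_iInter₂.mp h1 x hxmem
    rw [hint] at h2
    obtain ⟨y, ⟨hyY, hyS⟩, huy⟩ := h2
    rcases hyS huy with h | h
    · exact h
    · exact absurd hu2 h
  unfold med
  apply Set.Subset.antisymm
  · intro u hu
    by_cases hA' : u ∈ A
    · exact Or.inr ⟨hB hu, hA'⟩
    · exact Or.inl (Or.inr ⟨hsub ⟨hu, hA'⟩, hB hu⟩)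
  · rintro u (⟨⟨h, _⟩ | h⟩ | ⟨_, h⟩)
    · exact hA h
    · exact hΦB h
    · exact hA h
end
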